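/- Under Assumption 1, let (x^k, u^k)_{k∈ℕ} be a sequence generated by the Unifying AM algorithm. Then the sequence of objective values (G(x^k, u^k))_{k≥1} is nonincreasing, bounded below by −Σ_{(i,j)∈E} d_{ij}², and hence converges. -/

import Mathlib

/-!
Both halves of an AM iteration can only decrease `G`: each block step of the sensor update
minimizes `G` over that block, and for fixed `x` the normalized vector `v / ‖v‖` minimizes each
edge term `‖v‖² - 2 d ⟪u, v⟫` over the unit ball `‖u‖ ≤ 1` by Cauchy–Schwarz, the iterates `u^k`
staying in that ball. The same bound gives `‖v‖² - 2 d ⟪u, v⟫ ≥ ‖v‖² - 2 d ‖v‖ ≥ -d²` edgewise,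
and a nonincreasing sequence bounded below converges.
-/

open scoped RealInnerProductSpace BigOperators
open Finset

/-- The smooth surrogate objective `G(x,u)`. -/
noncomputable def objG (n N m : ℕ)
    (E1 : Finset (Fin N × Fin N)) (E2 : Finset (Fin N × Fin m))
    (a : Fin m → EuclideanSpace ℝ (Fin n))
    (d1 : Fin N × Fin N → ℝ) (d2 : Fin N × Fin m → ℝ)
    (x : Fin N → EuclideanSpace ℝ (Fin n))
    (u1 : Fin N × Fin N → EuclideanSpace ℝ (Fin n))
    (u2 : Fin N × Fin m → EuclideanSpace ℝ (Fin n)) : ℝ :=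
  (∑ e ∈ E1, (‖x e.1 - x e.2‖ ^ 2 - 2 * d1 e * ⟪u1 e, x e.1 - x e.2⟫)) +
  ∑ e ∈ E2, (‖x e.1 - a e.2‖ ^ 2 - 2 * d2 e * ⟪u2 e, x e.1 - a e.2⟫)

/-- The relation of the network graph on vertices `V ∪ A = Fin N ⊕ Fin m`. -/
def netRel (N m : ℕ) (E1 : Finset (Fin N × Fin N)) (E2 : Finset (Fin N × Fin m)) :
    (Fin N ⊕ Fin m) → (Fin N ⊕ Fin m) → Prop := fun p q =>
  match p, q with
  | Sum.inl i, Sum.inl j => (i, j) ∈ E1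
  | Sum.inl i, Sum.inr j => (i, j) ∈ E2
  | _, _ => False

/-- `(x^k, u^k)` is a sequence generated by the Unifying AM algorithm with
clusters `C 0, …, C (q−1)`:
* the initial `u^0` is feasible (each `u^0_{ij}` in the closed unit ball);
* the sensor update produces `x^{k+1}` from `x^k` through intermediate
  configurations `z 0 = x^k, …, z q = x^{k+1}`, where `z (l+1)` agrees with
  `z l` off the cluster `C l` and minimizes `G(·, u^k)` over all
  configurations agreeing with `z l` off `C l`;
* the auxiliary update sets `u^{k+1}_{ij} = v^{k+1}_{ij}/‖v^{k+1}_{ij}‖` when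
  `v^{k+1}_{ij} ≠ 0` and `0` otherwise (both cases captured by `‖v‖⁻¹ • v`,
  since `(0:ℝ)⁻¹ = 0`). -/
def IsAMSeq (n N m : ℕ)
    (E1 : Finset (Fin N × Fin N)) (E2 : Finset (Fin N × Fin m))
    (a : Fin m → EuclideanSpace ℝ (Fin n))
    (d1 : Fin N × Fin N → ℝ) (d2 : Fin N × Fin m → ℝ)
    (q : ℕ) (C : Fin q → Finset (Fin N))
    (x : ℕ → Fin N → EuclideanSpace ℝ (Fin n))
    (u1 : ℕ → Fin N × Fin N → EuclideanSpace ℝ (Fin n))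
    (u2 : ℕ → Fin N × Fin m → EuclideanSpace ℝ (Fin n)) : Prop :=
  (∀ e ∈ E1, ‖u1 0 e‖ ≤ 1) ∧ (∀ e ∈ E2, ‖u2 0 e‖ ≤ 1) ∧
  (∀ k : ℕ, ∃ z : Fin (q + 1) → Fin N → EuclideanSpace ℝ (Fin n),
    z 0 = x k ∧ z (Fin.last q) = x (k + 1) ∧
    ∀ l : Fin q,
      (∀ i : Fin N, i ∉ C l → z l.succ i = z l.castSucc i) ∧
      (∀ w : Fin N → EuclideanSpace ℝ (Fin n),
        (∀ i : Fin N, i ∉ C l → w i = z l.castSucc i) →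
        objG n N m E1 E2 a d1 d2 (z l.succ) (u1 k) (u2 k) ≤
          objG n N m E1 E2 a d1 d2 w (u1 k) (u2 k))) ∧
  (∀ k : ℕ, ∀ e ∈ E1, u1 (k + 1) e =
    ‖x (k + 1) e.1 - x (k + 1) e.2‖⁻¹ • (x (k + 1) e.1 - x (k + 1) e.2)) ∧
  (∀ k : ℕ, ∀ e ∈ E2, u2 (k + 1) e =
    ‖x (k + 1) e.1 - a e.2‖⁻¹ • (x (k + 1) e.1 - a e.2))

section

variable {F : Type*} [SeminormedAddCommGroup F] [InnerProductSpace ℝ F]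

theorem real_inner_inv_norm_smul_self (v : F) : ⟪‖v‖⁻¹ • v, v⟫ = ‖v‖ := by
  rcases eq_or_ne ‖v‖ 0 with hv | hv
  · simp [hv]
  · rw [real_inner_smul_left, real_inner_self_eq_norm_sq, sq, inv_mul_cancel_left₀ hv]

theorem mul_real_inner_le_mul_norm {d : ℝ} (hd : 0 ≤ d) {u : F} (hu : ‖u‖ ≤ 1) (v : F) :
    d * ⟪u, v⟫ ≤ d * ‖v‖ :=
  mul_le_mul_of_nonneg_left
    ((real_inner_le_norm u v).trans (mul_le_of_le_one_left (norm_nonneg v) hu)) hd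

theorem norm_sq_sub_inner_inv_norm_smul_le {d : ℝ} (hd : 0 ≤ d) {u : F} (hu : ‖u‖ ≤ 1) (v : F) :
    ‖v‖ ^ 2 - 2 * d * ⟪‖v‖⁻¹ • v, v⟫ ≤ ‖v‖ ^ 2 - 2 * d * ⟪u, v⟫ := by
  rw [real_inner_inv_norm_smul_self]
  linarith [mul_real_inner_le_mul_norm hd hu v]

theorem neg_sq_le_norm_sq_sub_inner {d : ℝ} (hd : 0 ≤ d) {u : F} (hu : ‖u‖ ≤ 1) (v : F) :
    -d ^ 2 ≤ ‖v‖ ^ 2 - 2 * d * ⟪u, v⟫ := by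
  nlinarith [mul_real_inner_le_mul_norm hd hu v, sq_nonneg (‖v‖ - d)]

end

namespace IsAMSeq

variable {n N m q : ℕ} {E1 : Finset (Fin N × Fin N)} {E2 : Finset (Fin N × Fin m)}
  {a : Fin m → EuclideanSpace ℝ (Fin n)} {d1 : Fin N × Fin N → ℝ} {d2 : Fin N × Fin m → ℝ}
  {C : Fin q → Finset (Fin N)} {x : ℕ → Fin N → EuclideanSpace ℝ (Fin n)}
  {u1 : ℕ → Fin N × Fin N → EuclideanSpace ℝ (Fin n)}
  {u2 : ℕ → Fin N × Fin m → EuclideanSpace ℝ (Fin n)}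

local notation "G" => objG n N m E1 E2 a d1 d2

theorem norm_u1_le_one (hAM : IsAMSeq n N m E1 E2 a d1 d2 q C x u1 u2) (k : ℕ) :
    ∀ e ∈ E1, ‖u1 k e‖ ≤ 1 := by
  intro e he
  cases k with
  | zero => exact hAM.1 e he
  | succ k =>
    rw [hAM.2.2.2.1 k e he]
    exact mem_closedBall_zero_iff.1 (inv_norm_smul_mem_unitClosedBall _)

theorem norm_u2_le_one (hAM : IsAMSeq n N m E1 E2 a d1 d2 q C x u1 u2) (k : ℕ) :
    ∀ e ∈ E2, ‖u2 k e‖ ≤ 1 := by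
  intro e he
  cases k with
  | zero => exact hAM.2.1 e he
  | succ k =>
    rw [hAM.2.2.2.2 k e he]
    exact mem_closedBall_zero_iff.1 (inv_norm_smul_mem_unitClosedBall _)

theorem objG_sensor_update_le (hAM : IsAMSeq n N m E1 E2 a d1 d2 q C x u1 u2) (k : ℕ) :
    G (x (k + 1)) (u1 k) (u2 k) ≤ G (x k) (u1 k) (u2 k) := by
  obtain ⟨z, hz0, hzlast, hstep⟩ := hAM.2.2.1 k
  have hanti : Antitone fun l => G (z l) (u1 k) (u2 k) :=
    Fin.antitone_iff_succ_le.2 fun l => (hstep l).2 _ fun _ _ => rfl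
  simpa only [hz0, hzlast] using hanti (Fin.zero_le (Fin.last q))

theorem objG_auxiliary_update_le (hAM : IsAMSeq n N m E1 E2 a d1 d2 q C x u1 u2)
    (hd1 : ∀ e ∈ E1, 0 ≤ d1 e) (hd2 : ∀ e ∈ E2, 0 ≤ d2 e) (k : ℕ) :
    G (x (k + 1)) (u1 (k + 1)) (u2 (k + 1)) ≤ G (x (k + 1)) (u1 k) (u2 k) := by
  refine add_le_add (sum_le_sum fun e he => ?_) (sum_le_sum fun e he => ?_)
  · rw [hAM.2.2.2.1 k e he]
    exact norm_sq_sub_inner_inv_norm_smul_le (hd1 e he) (hAM.norm_u1_le_one k e he) _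
  · rw [hAM.2.2.2.2 k e he]
    exact norm_sq_sub_inner_inv_norm_smul_le (hd2 e he) (hAM.norm_u2_le_one k e he) _

theorem objG_succ_le (hAM : IsAMSeq n N m E1 E2 a d1 d2 q C x u1 u2)
    (hd1 : ∀ e ∈ E1, 0 ≤ d1 e) (hd2 : ∀ e ∈ E2, 0 ≤ d2 e) (k : ℕ) :
    G (x (k + 1)) (u1 (k + 1)) (u2 (k + 1)) ≤ G (x k) (u1 k) (u2 k) :=
  (hAM.objG_auxiliary_update_le hd1 hd2 k).trans (hAM.objG_sensor_update_le k)

theorem neg_sum_sq_le_objG (hAM : IsAMSeq n N m E1 E2 a d1 d2 q C x u1 u2)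
    (hd1 : ∀ e ∈ E1, 0 ≤ d1 e) (hd2 : ∀ e ∈ E2, 0 ≤ d2 e) (k : ℕ) :
    -((∑ e ∈ E1, d1 e ^ 2) + ∑ e ∈ E2, d2 e ^ 2) ≤ G (x k) (u1 k) (u2 k) := by
  rw [neg_add, ← sum_neg_distrib, ← sum_neg_distrib]
  exact add_le_add
    (sum_le_sum fun e he => neg_sq_le_norm_sq_sub_inner (hd1 e he) (hAM.norm_u1_le_one k e he) _)
    (sum_le_sum fun e he => neg_sq_le_norm_sq_sub_inner (hd2 e he) (hAM.norm_u2_le_one k e he) _)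

end IsAMSeq

theorem stmt15_general (n N m : ℕ)
    (E1 : Finset (Fin N × Fin N))
    (E2 : Finset (Fin N × Fin m))
    (a : Fin m → EuclideanSpace ℝ (Fin n))
    (d1 : Fin N × Fin N → ℝ) (d2 : Fin N × Fin m → ℝ)
    (hd1 : ∀ e ∈ E1, 0 ≤ d1 e) (hd2 : ∀ e ∈ E2, 0 ≤ d2 e)
    (q : ℕ) (C : Fin q → Finset (Fin N))
    (x : ℕ → Fin N → EuclideanSpace ℝ (Fin n))
    (u1 : ℕ → Fin N × Fin N → EuclideanSpace ℝ (Fin n))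
    (u2 : ℕ → Fin N × Fin m → EuclideanSpace ℝ (Fin n))
    (hAM : IsAMSeq n N m E1 E2 a d1 d2 q C x u1 u2) :
    (∀ k : ℕ, 1 ≤ k →
      objG n N m E1 E2 a d1 d2 (x (k + 1)) (u1 (k + 1)) (u2 (k + 1)) ≤
        objG n N m E1 E2 a d1 d2 (x k) (u1 k) (u2 k)) ∧
    (∀ k : ℕ, 1 ≤ k →
      -((∑ e ∈ E1, d1 e ^ 2) + ∑ e ∈ E2, d2 e ^ 2) ≤
        objG n N m E1 E2 a d1 d2 (x k) (u1 k) (u2 k)) ∧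
    ∃ c : ℝ, Filter.Tendsto
      (fun k => objG n N m E1 E2 a d1 d2 (x k) (u1 k) (u2 k))
      Filter.atTop (nhds c) := by
  have hmono := hAM.objG_succ_le hd1 hd2
  have hlb := hAM.neg_sum_sq_le_objG hd1 hd2
  exact ⟨fun k _ => hmono k, fun k _ => hlb k, _,
    tendsto_atTop_ciInf (antitone_nat_of_succ_le hmono) ⟨_, Set.forall_mem_range.2 hlb⟩⟩

/-- Under Assumption 1, along any sequence generated by the Unifying AM
algorithm, the sequence of objective values `(G(x^k,u^k))_{k ≥ 1}` is
nonincreasing, bounded below by `−∑_{(i,j)∈E} d_{ij}²`, and hence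
converges. -/
theorem stmt15 (n N m : ℕ) (hn : 1 ≤ n) (hN : 1 ≤ N)
    (E1 : Finset (Fin N × Fin N)) (hE1 : ∀ e ∈ E1, e.1 < e.2)
    (E2 : Finset (Fin N × Fin m))
    (a : Fin m → EuclideanSpace ℝ (Fin n))
    (d1 : Fin N × Fin N → ℝ) (d2 : Fin N × Fin m → ℝ)
    (hd1 : ∀ e ∈ E1, 0 ≤ d1 e) (hd2 : ∀ e ∈ E2, 0 ≤ d2 e)
    (hconn : (SimpleGraph.fromRel (netRel N m E1 E2)).Connected)
    (hm : 1 ≤ m)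
    (q : ℕ) (C : Fin q → Finset (Fin N))
    (hCne : ∀ l, (C l).Nonempty)
    (hCdisj : ∀ l l', l ≠ l' → Disjoint (C l) (C l'))
    (hCcover : ∀ i : Fin N, ∃ l, i ∈ C l)
    (x : ℕ → Fin N → EuclideanSpace ℝ (Fin n))
    (u1 : ℕ → Fin N × Fin N → EuclideanSpace ℝ (Fin n))
    (u2 : ℕ → Fin N × Fin m → EuclideanSpace ℝ (Fin n))
    (hAM : IsAMSeq n N m E1 E2 a d1 d2 q C x u1 u2) :
    (∀ k : ℕ, 1 ≤ k →
      objG n N m E1 E2 a d1 d2 (x (k + 1)) (u1 (k + 1)) (u2 (k + 1)) ≤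
        objG n N m E1 E2 a d1 d2 (x k) (u1 k) (u2 k)) ∧
    (∀ k : ℕ, 1 ≤ k →
      -((∑ e ∈ E1, d1 e ^ 2) + ∑ e ∈ E2, d2 e ^ 2) ≤
        objG n N m E1 E2 a d1 d2 (x k) (u1 k) (u2 k)) ∧
    ∃ c : ℝ, Filter.Tendsto
      (fun k => objG n N m E1 E2 a d1 d2 (x k) (u1 k) (u2 k))
      Filter.atTop (nhds c) :=
  stmt15_general n N m E1 E2 a d1 d2 hd1 hd2 q C x u1 u2 hAM
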